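/- Let 0 < a ≤ 1/2 and ε > 0. There exists a constant C = C(ε, a) > 0 such that for all t > 0 and all θ, θ' with |θ − θ'| ≤ π, |k_a(t, θ − θ') − h(t, θ − θ')| ≤ C, where k_a(t, φ) = (1/2π) Σ_{n∈ℤ} e^{−(n² − 2an²/√(n²+ε)) t} e^{inφ} and h(t, φ) = (1/2π) Σ_{n∈ℤ} e^{−n² t} e^{inφ}. -/

import Mathlib

open MeasureTheory Real

/-- The heat kernel of the operator `T_a = -Σ_n (n² - 2an²/√(n²+ε)) P_n` on
`L²(𝕊¹)`: `k_a(t, φ) = (1/2π) Σ_{n∈ℤ} e^{-(n² - 2an²/√(n²+ε)) t} e^{inφ}`. -/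
noncomputable def heatKernelTa (a ε t φ : ℝ) : ℂ :=
  (1 / (2 * (π : ℂ))) * ∑' n : ℤ,
    Complex.exp (-((((n : ℝ) ^ 2 - 2 * a * (n : ℝ) ^ 2 / Real.sqrt ((n : ℝ) ^ 2 + ε)) * t : ℝ) : ℂ)) *
      Complex.exp (Complex.I * (n : ℂ) * (φ : ℂ))

/-- The heat kernel of the Laplace–Beltrami operator `Δ_{𝕊¹} = ∂_θ²` on the
unit circle: `h(t, φ) = (1/2π) Σ_{n∈ℤ} e^{-n² t} e^{inφ}`. -/
noncomputable def heatKernelCircle (t φ : ℝ) : ℂ :=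
  (1 / (2 * (π : ℂ))) * ∑' n : ℤ,
    Complex.exp (-(((n : ℝ) ^ 2 * t : ℝ) : ℂ)) * Complex.exp (Complex.I * (n : ℂ) * (φ : ℂ))

/-! With `λ n = n² - 2an²/√(n² + ε)` one has `0 ≤ 2an²/√(n² + ε) ≤ |n|` because `2a ≤ 1`, so
`n² - |n| ≤ λ n ≤ n²`. Hence `0 ≤ e^{-λ n t} - e^{-n² t} ≤ e^{-(|n| - 1)² t} - e^{-n² t}` for `n ≠ 0`,
and the difference vanishes at `n = 0`. The right-hand side telescopes on each half-line of `ℤ`,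
so `Σ_n |e^{-λ n t} - e^{-n² t}| ≤ 2` for every `t ≥ 0`, and the two kernels differ by at most
`2 / (2π) < 1` uniformly in `t` and `φ`. -/

theorem summable_and_tsum_le_of_le_sub_succ {d Q : ℕ → ℝ} (hd : ∀ k, 0 ≤ d k)
    (hQ : ∀ k, 0 ≤ Q k) (hdQ : ∀ k, d k ≤ Q k - Q (k + 1)) :
    Summable d ∧ ∑' k, d k ≤ Q 0 := by
  have partial_le : ∀ n, ∑ k ∈ Finset.range n, d k ≤ Q 0 := fun n =>
    calc ∑ k ∈ Finset.range n, d k ≤ ∑ k ∈ Finset.range n, (Q k - Q (k + 1)) :=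
          Finset.sum_le_sum fun k _ => hdQ k
      _ = Q 0 - Q n := Finset.sum_range_sub' Q n
      _ ≤ Q 0 := sub_le_self _ (hQ n)
  exact ⟨summable_of_sum_range_le hd partial_le, Real.tsum_le_of_sum_range_le hd partial_le⟩

theorem summable_and_tsum_int_le_of_le_sub_succ {D : ℤ → ℝ} {Q : ℕ → ℝ} (hD : ∀ n, 0 ≤ D n)
    (hD0 : D 0 = 0) (hQ : ∀ k, 0 ≤ Q k)
    (hDQ : ∀ k : ℕ, D (k + 1) ≤ Q k - Q (k + 1) ∧ D (-(k + 1)) ≤ Q k - Q (k + 1)) :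
    Summable D ∧ ∑' n, D n ≤ 2 * Q 0 := by
  obtain ⟨hpos, hpos_le⟩ :=
    summable_and_tsum_le_of_le_sub_succ (fun k => hD (k + 1)) hQ fun k => (hDQ k).1
  obtain ⟨hneg, hneg_le⟩ :=
    summable_and_tsum_le_of_le_sub_succ (fun k => hD (-(k + 1))) hQ fun k => (hDQ k).2
  have hnat : Summable fun k : ℕ => D k :=
    (summable_nat_add_iff 1).mp (by exact_mod_cast hpos)
  have hnat_eq : ∑' k : ℕ, D k = ∑' k : ℕ, D (k + 1) := by
    rw [hnat.tsum_eq_zero_add, Nat.cast_zero, hD0, zero_add]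
    push_cast
    rfl
  refine ⟨.of_nat_of_neg_add_one hnat hneg, ?_⟩
  rw [tsum_of_nat_of_neg_add_one hnat hneg, hnat_eq]
  linarith

theorem summable_ofReal_mul_of_norm_eq_one {ι : Type*} {f : ι → ℝ} {c : ι → ℂ}
    (hc : ∀ i, ‖c i‖ = 1) (hf : Summable f) : Summable fun i => (f i : ℂ) * c i :=
  .of_norm <| by simpa only [norm_mul, hc, mul_one, Complex.norm_real, Real.norm_eq_abs] using hf.abs

theorem norm_tsum_ofReal_mul_sub_le {ι : Type*} {f g : ι → ℝ} {c : ι → ℂ}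
    (hc : ∀ i, ‖c i‖ = 1) (hf : Summable f) (hg : Summable g) :
    ‖∑' i, (f i : ℂ) * c i - ∑' i, (g i : ℂ) * c i‖ ≤ ∑' i, |f i - g i| := by
  rw [← (summable_ofReal_mul_of_norm_eq_one hc hf).tsum_sub
    (summable_ofReal_mul_of_norm_eq_one hc hg)]
  simp only [← sub_mul, ← Complex.ofReal_sub]
  calc _ ≤ _ := norm_tsum_le_tsum_norm (summable_ofReal_mul_of_norm_eq_one hc (hf.sub hg)).norm
    _ = _ := by simp only [norm_mul, hc, mul_one, Complex.norm_real, Real.norm_eq_abs]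

theorem summable_exp_neg_sq_mul {t : ℝ} (ht : 0 < t) :
    Summable fun n : ℤ => rexp (-((n : ℝ) ^ 2 * t)) := by
  have hnat : Summable fun k : ℕ => rexp (-((k : ℝ) ^ 2 * t)) := by
    simpa [mul_comm] using
      Real.summable_exp_nat_mul_of_ge (neg_lt_zero.mpr ht) (f := fun k : ℕ => (k : ℝ) ^ 2)
        fun k => by exact_mod_cast Nat.le_self_pow two_ne_zero k
  exact summable_int_iff_summable_nat_and_neg.mpr ⟨by exact_mod_cast hnat, by simpa using hnat⟩

theorem summable_and_tsum_abs_exp_sub_le_two {lam : ℝ → ℝ} (hlow : ∀ x, x ^ 2 - |x| ≤ lam x)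
    (hup : ∀ x, lam x ≤ x ^ 2) {t : ℝ} (ht : 0 ≤ t) :
    Summable (fun n : ℤ => |rexp (-(lam n * t)) - rexp (-((n : ℝ) ^ 2 * t))|) ∧
      ∑' n : ℤ, |rexp (-(lam n * t)) - rexp (-((n : ℝ) ^ 2 * t))| ≤ 2 := by
  have hnonneg : ∀ x : ℝ, 0 ≤ rexp (-(lam x * t)) - rexp (-(x ^ 2 * t)) := fun x =>
    sub_nonneg.mpr (Real.exp_le_exp.mpr (by nlinarith [hup x]))
  have hlam0 : lam 0 = 0 := le_antisymm (by simpa using hup 0) (by simpa using hlow 0)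
  have htelescope : ∀ (k : ℕ) (x : ℝ), |x| = k + 1 →
      |rexp (-(lam x * t)) - rexp (-(x ^ 2 * t))| ≤
        rexp (-((k : ℝ) ^ 2 * t)) - rexp (-(((k + 1 : ℕ) : ℝ) ^ 2 * t)) := by
    intro k x hx
    have hlam : (k : ℝ) ^ 2 ≤ lam x := by
      have := hlow x
      rw [← sq_abs, hx] at this
      nlinarith
    have hsq : x ^ 2 = ((k + 1 : ℕ) : ℝ) ^ 2 := by
      rw [← sq_abs, hx]
      push_cast
      ring
    rw [abs_of_nonneg (hnonneg x), hsq]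
    gcongr
  simpa using summable_and_tsum_int_le_of_le_sub_succ
    (D := fun n : ℤ => |rexp (-(lam n * t)) - rexp (-((n : ℝ) ^ 2 * t))|) (fun n => abs_nonneg _)
    (by simp [hlam0]) (Q := fun k => rexp (-((k : ℝ) ^ 2 * t))) (fun k => (Real.exp_pos _).le)
    fun k => ⟨htelescope k _ (by push_cast; rw [abs_of_nonneg (by positivity)]),
      htelescope k _ (by push_cast; rw [abs_neg, abs_of_nonneg (by positivity)])⟩

noncomputable def multiplierHeatKernel (lam : ℝ → ℝ) (t φ : ℝ) : ℂ :=
  (1 / (2 * (π : ℂ))) * ∑' n : ℤ,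
    Complex.exp (-((lam n * t : ℝ) : ℂ)) * Complex.exp (Complex.I * (n : ℂ) * (φ : ℂ))

theorem norm_multiplierHeatKernel_sub_le {lam mu : ℝ → ℝ} {t : ℝ}
    (hlam : Summable fun n : ℤ => rexp (-(lam n * t)))
    (hmu : Summable fun n : ℤ => rexp (-(mu n * t))) (φ : ℝ) :
    ‖multiplierHeatKernel lam t φ - multiplierHeatKernel mu t φ‖ ≤
      (2 * π)⁻¹ * ∑' n : ℤ, |rexp (-(lam n * t)) - rexp (-(mu n * t))| := by
  simp only [multiplierHeatKernel, ← Complex.ofReal_exp, ← Complex.ofReal_neg]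
  rw [← mul_sub, norm_mul]
  gcongr
  · simp [abs_of_pos Real.pi_pos]
  · exact norm_tsum_ofReal_mul_sub_le (fun n => by simp [Complex.norm_exp]) hlam hmu

noncomputable def eigenvalueTa (a ε x : ℝ) : ℝ :=
  x ^ 2 - 2 * a * x ^ 2 / √(x ^ 2 + ε)

theorem heatKernelTa_eq (a ε t φ : ℝ) :
    heatKernelTa a ε t φ = multiplierHeatKernel (eigenvalueTa a ε) t φ := rfl

theorem heatKernelCircle_eq (t φ : ℝ) :
    heatKernelCircle t φ = multiplierHeatKernel (· ^ 2) t φ := rfl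

theorem eigenvalueTa_le_sq {a : ℝ} (ha : 0 ≤ a) (ε x : ℝ) : eigenvalueTa a ε x ≤ x ^ 2 := by
  unfold eigenvalueTa
  have : 0 ≤ 2 * a * x ^ 2 / √(x ^ 2 + ε) := by positivity
  linarith

theorem sq_sub_abs_le_eigenvalueTa {a ε : ℝ} (ha : a ≤ 1 / 2) (hε : 0 ≤ ε) (x : ℝ) :
    x ^ 2 - |x| ≤ eigenvalueTa a ε x := by
  have hs : |x| ≤ √(x ^ 2 + ε) := by
    rw [← Real.sqrt_sq_eq_abs]
    exact Real.sqrt_le_sqrt (by linarith)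
  have : 2 * a * x ^ 2 / √(x ^ 2 + ε) ≤ |x| := by
    refine div_le_of_le_mul₀ (Real.sqrt_nonneg _) (abs_nonneg x) ?_
    calc 2 * a * x ^ 2 ≤ |x| * |x| := by nlinarith [sq_abs x, sq_nonneg x]
      _ ≤ |x| * √(x ^ 2 + ε) := by gcongr
  unfold eigenvalueTa
  linarith

/-- Uniform comparison of the heat kernels of `T_a` and of `Δ_{𝕊¹}`: for
`0 < a ≤ 1/2` and `ε > 0` there is `C = C(ε, a) > 0` such that
`|k_a(t, θ-θ') - h(t, θ-θ')| ≤ C` for all `t > 0` and `|θ - θ'| ≤ π`. -/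
theorem heat_kernel_comparison_uniform (a ε : ℝ) (ha0 : 0 < a) (ha1 : a ≤ 1 / 2)
    (hε : 0 < ε) :
    ∃ C > 0, ∀ t : ℝ, 0 < t → ∀ θ θ' : ℝ, |θ - θ'| ≤ π →
      ‖heatKernelTa a ε t (θ - θ') - heatKernelCircle t (θ - θ')‖ ≤ C := by
  refine ⟨1, one_pos, fun t ht θ θ' _ => ?_⟩
  obtain ⟨hdiff, hdiff_le⟩ := summable_and_tsum_abs_exp_sub_le_two
    (sq_sub_abs_le_eigenvalueTa ha1 hε.le) (eigenvalueTa_le_sq ha0.le ε) ht.le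
  have hcircle := summable_exp_neg_sq_mul ht
  have hTa : Summable fun n : ℤ => rexp (-(eigenvalueTa a ε n * t)) := by
    simpa only [sub_add_cancel] using hdiff.of_abs.add hcircle
  rw [heatKernelTa_eq, heatKernelCircle_eq]
  calc _ ≤ (2 * π)⁻¹ * ∑' n : ℤ,
          |rexp (-(eigenvalueTa a ε n * t)) - rexp (-((n : ℝ) ^ 2 * t))| :=
        norm_multiplierHeatKernel_sub_le (mu := (· ^ 2)) hTa hcircle _
    _ ≤ (2 * π)⁻¹ * 2 := by gcongr
    _ ≤ 1 := by
        rw [inv_mul_le_iff₀ (by positivity)]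
        linarith [Real.pi_gt_three]
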